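/- arXiv:1408.2002 — 2 statements merged into one kernel-verified Lean document; each statement's English description precedes it below -/
import Mathlib

section
/- Let V₂ be the set of vectors in ℝ^6 having exactly two coordinates equal to 2 and the remaining four coordinates equal to 0, and let V₃ be the set of vectors in ℝ^6 having exactly four coordinates equal to 2 and the remaining two coordinates equal to 0. Let H be the simple graph on V₂ ∪ V₃ in which two distinct points are adjacent if and only if their squared Euclidean distance equals 8. Then the chromatic number of H equals 8. -/
/-- The graph on a set `P` of points of `ℝⁿ` where two distinct points are
adjacent iff their squared Euclidean distance equals `s`. -/
def distSqGraph {n : ℕ} (P : Set (Fin n → ℝ)) (s : ℝ) : SimpleGraph P where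
  Adj x y := x ≠ y ∧ ∑ i, (x.1 i - y.1 i) ^ 2 = s
  symm := by
    constructor
    rintro x y ⟨hne, h⟩
    refine ⟨hne.symm, ?_⟩
    rw [← h]
    exact Finset.sum_congr rfl fun i _ => by ring
  loopless := by constructor; rintro x ⟨h, -⟩; exact h rfl

/-- Vectors in `ℝ⁶` with exactly `k` coordinates equal to `2` and the rest `0`. -/
def twosAndZeros (k : ℕ) : Set (Fin 6 → ℝ) :=
  {x | ∃ s : Finset (Fin 6), s.card = k ∧ ∀ i, x i = if i ∈ s then 2 else 0}

/-!
Writing a vertex as `2 • 𝟙ₛ` for a set `s ⊆ Fin 6`, the squared distance between `2 • 𝟙ₛ` and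
`2 • 𝟙ₜ` is `4 * #(s ∆ t)`, so `H` is the graph on the 2- and 4-subsets of a 6-set in which `s` and
`t` are adjacent iff `#(s ∆ t) = 2`.

Injecting the six points into `𝔽₂³` and coloring `s` by the sum of its points is proper, because
the colors of adjacent sets differ by the sum of two distinct points. Conversely, in an independent
set the pairs and the complements of the quadruples form two matchings of `K₆` in which every edge
of one meets every edge of the other; so an independent set has at most four elements, and the 30
vertices need eight colors.
-/

open Finset SimpleGraph
open scoped symmDiff

section SymmDiff

variable {α : Type*} [DecidableEq α]

theorem Finset.sum_symmDiff_add_two_nsmul_sum_inter {M : Type*} [AddCommMonoid M] (f : α → M)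
    (s t : Finset α) :
    ∑ i ∈ s ∆ t, f i + 2 • ∑ i ∈ s ∩ t, f i = ∑ i ∈ s, f i + ∑ i ∈ t, f i := by
  have hsub : s ∩ t ⊆ s ∪ t := inter_subset_left.trans subset_union_left
  rw [two_nsmul, ← add_assoc, symmDiff_eq_sup_sdiff_inf, sup_eq_union, inf_eq_inter,
    sum_sdiff hsub, sum_union_inter]

theorem Finset.card_symmDiff_add_two_mul_card_inter (s t : Finset α) :
    #(s ∆ t) + 2 * #(s ∩ t) = #s + #t := by
  simpa only [card_eq_sum_ones, smul_eq_mul] using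
    sum_symmDiff_add_two_nsmul_sum_inter (fun _ => (1 : ℕ)) s t

theorem Finset.sum_add_sum_eq_sum_symmDiff {M : Type*} [AddCommGroup M] [Module (ZMod 2) M]
    (f : α → M) (s t : Finset α) : ∑ i ∈ s, f i + ∑ i ∈ t, f i = ∑ i ∈ s ∆ t, f i := by
  rw [← sum_symmDiff_add_two_nsmul_sum_inter, two_nsmul, ZModModule.add_self, add_zero]

end SymmDiff

def symmDiffGraph (α : Type*) [DecidableEq α] (k : ℕ) : SimpleGraph (Finset α) where
  Adj s t := s ≠ t ∧ #(s ∆ t) = k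
  symm := ⟨fun _ _ h => ⟨h.1.symm, by rw [symmDiff_comm]; exact h.2⟩⟩
  loopless := ⟨fun _ h => h.1 rfl⟩

@[simp]
theorem symmDiffGraph_adj {α : Type*} [DecidableEq α] {k : ℕ} {s t : Finset α} :
    (symmDiffGraph α k).Adj s t ↔ s ≠ t ∧ #(s ∆ t) = k :=
  Iff.rfl

section Coloring

variable {α : Type*} [DecidableEq α]

theorem sum_ne_sum_of_symmDiffGraph_two_adj {M : Type*} [AddCommGroup M] [Module (ZMod 2) M]
    {e : α → M} (he : Function.Injective e) {s t : Finset α} (h : (symmDiffGraph α 2).Adj s t) :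
    ∑ i ∈ s, e i ≠ ∑ i ∈ t, e i := by
  obtain ⟨i, j, hij, hst⟩ := card_eq_two.mp (symmDiffGraph_adj.mp h).2
  intro heq
  have : e i + e j = 0 := by
    rw [← sum_pair hij, ← hst, ← sum_add_sum_eq_sum_symmDiff, heq, ZModModule.add_self]
  exact hij (he (sub_eq_zero.mp (by rwa [ZModModule.sub_eq_add])))

theorem symmDiffGraph_two_colorable [Fintype α] {m : ℕ} (h : Fintype.card α ≤ 2 ^ m) :
    (symmDiffGraph α 2).Colorable (2 ^ m) := by
  obtain ⟨e⟩ := Function.Embedding.nonempty_of_card_le (β := Fin m → ZMod 2) (by simpa using h)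
  simpa using (Coloring.mk (fun s => ∑ i ∈ s, e i)
    (sum_ne_sum_of_symmDiffGraph_two_adj e.injective)).colorable

end Coloring

section Matchings

variable {α : Type*} [DecidableEq α]

theorem Finset.card_le_card_of_pairwiseDisjoint_of_inter_nonempty {A : Finset (Finset α)}
    {b : Finset α} (hA : (A : Set (Finset α)).PairwiseDisjoint id)
    (hb : ∀ a ∈ A, (a ∩ b).Nonempty) : #A ≤ #b :=
  calc #A = ∑ _a ∈ A, 1 := card_eq_sum_ones A
    _ ≤ ∑ a ∈ A, #(a ∩ b) := sum_le_sum fun _ ha => (hb _ ha).card_pos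
    _ = #(A.biUnion (· ∩ b)) := (card_biUnion (hA.mono fun _ => inter_subset_left)).symm
    _ ≤ #b := card_le_card (biUnion_subset.mpr fun _ _ => inter_subset_right)

theorem Finset.mul_card_le_card_of_pairwiseDisjoint [Fintype α] {A : Finset (Finset α)} {r : ℕ}
    (hA : (A : Set (Finset α)).PairwiseDisjoint id) (hr : ∀ a ∈ A, #a = r) :
    r * #A ≤ Fintype.card α :=
  calc r * #A = ∑ a ∈ A, #a := by rw [sum_congr rfl hr, sum_const, smul_eq_mul, mul_comm]
    _ = #(A.biUnion id) := (card_biUnion hA).symm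
    _ ≤ Fintype.card α := card_le_univ _

theorem Finset.card_add_card_le_of_pairwiseDisjoint_of_inter_nonempty [Fintype α]
    {A B : Finset (Finset α)} (hA : (A : Set (Finset α)).PairwiseDisjoint id)
    (hB : (B : Set (Finset α)).PairwiseDisjoint id) (hA2 : ∀ a ∈ A, #a = 2)
    (hB2 : ∀ b ∈ B, #b = 2) (hAB : ∀ a ∈ A, ∀ b ∈ B, (a ∩ b).Nonempty) :
    #A + #B ≤ max 4 (Fintype.card α / 2) := by
  have hA' := mul_card_le_card_of_pairwiseDisjoint hA hA2
  have hB' := mul_card_le_card_of_pairwiseDisjoint hB hB2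
  rcases B.eq_empty_or_nonempty with rfl | ⟨b, hb⟩
  · exact le_max_of_le_right (by rw [card_empty]; omega)
  rcases A.eq_empty_or_nonempty with rfl | ⟨a, ha⟩
  · exact le_max_of_le_right (by rw [card_empty]; omega)
  have hAb : #A ≤ 2 :=
    hB2 b hb ▸ card_le_card_of_pairwiseDisjoint_of_inter_nonempty hA fun a ha => hAB a ha b hb
  have hBa : #B ≤ 2 := hA2 a ha ▸ card_le_card_of_pairwiseDisjoint_of_inter_nonempty hB
    fun b hb => inter_comm a b ▸ hAB a ha b hb
  exact le_max_of_le_left (by omega)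

theorem Finset.disjoint_of_card_symmDiff_ne_two {a b : Finset α} (ha : #a = 2) (hb : #b = 2)
    (hab : a ≠ b) (h : #(a ∆ b) ≠ 2) : Disjoint a b := by
  have hcard := card_symmDiff_add_two_mul_card_inter a b
  have hle : #(a ∩ b) ≤ 2 := ha ▸ card_le_card inter_subset_left
  have hne : #(a ∩ b) ≠ 2 := fun h2 => hab <|
    (eq_of_subset_of_card_le inter_subset_left (by omega)).symm.trans
      (eq_of_subset_of_card_le inter_subset_right (by omega))
  rw [disjoint_iff_inter_eq_empty, ← card_eq_zero]
  omega

theorem Finset.inter_nonempty_of_card_symmDiff_compl_ne_two [Fintype α]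
    (hα : Fintype.card α = 6) {a b : Finset α} (ha : #a = 2) (hb : #b = 2)
    (h : #(a ∆ bᶜ) ≠ 2) : (a ∩ b).Nonempty := by
  have hcard := card_symmDiff_add_two_mul_card_inter a bᶜ
  have hsplit := card_inter_add_card_sdiff a b
  rw [card_compl, ← sdiff_eq_inter_compl] at hcard
  rw [← card_pos]
  omega

theorem card_le_four_of_isIndepSet_symmDiffGraph_two [Fintype α] (hα : Fintype.card α = 6)
    {u : Finset (Finset α)} (hu : ∀ s ∈ u, #s = 2 ∨ #s = 4)
    (hind : (symmDiffGraph α 2).IsIndepSet u) : #u ≤ 4 := by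
  set A := u.filter (#· = 2)
  set C := u.filter (#· ≠ 2)
  have hsplit : #A + #C = #u := card_filter_add_card_filter_not _
  have hC : #(C.image compl) = #C := card_image_of_injective _ compl_injective
  have hnadj {s t} (hs : s ∈ u) (ht : t ∈ u) (hst : s ≠ t) : #(s ∆ t) ≠ 2 :=
    fun h => hind hs ht hst ⟨hst, h⟩
  have hA2 : ∀ a ∈ A, #a = 2 := fun a ha => (mem_filter.mp ha).2
  have hC4 : ∀ s ∈ C, #s = 4 := fun s hs =>
    (hu s (mem_filter.mp hs).1).resolve_left (mem_filter.mp hs).2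
  have hB2 : ∀ b ∈ C.image compl, #b = 2 := by
    simp only [mem_image]
    rintro _ ⟨s, hs, rfl⟩
    rw [card_compl, hα, hC4 s hs]
  have hdA : (A : Set (Finset α)).PairwiseDisjoint id := fun a ha a' ha' hne =>
    disjoint_of_card_symmDiff_ne_two (hA2 a ha) (hA2 a' ha') hne
      (hnadj (mem_filter.mp ha).1 (mem_filter.mp ha').1 hne)
  have hdB : ((C.image compl : Finset (Finset α)) : Set (Finset α)).PairwiseDisjoint id := by
    simp only [coe_image]
    rintro _ ⟨s, hs, rfl⟩ _ ⟨t, ht, rfl⟩ hne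
    refine disjoint_of_card_symmDiff_ne_two (hB2 _ (mem_image_of_mem _ hs))
      (hB2 _ (mem_image_of_mem _ ht)) hne ?_
    rw [id, id, compl_symmDiff_compl]
    exact hnadj (mem_filter.mp hs).1 (mem_filter.mp ht).1 (fun h => hne (h ▸ rfl))
  have hAB : ∀ a ∈ A, ∀ b ∈ C.image compl, (a ∩ b).Nonempty := by
    simp only [mem_image]
    rintro a ha _ ⟨s, hs, rfl⟩
    refine inter_nonempty_of_card_symmDiff_compl_ne_two hα (hA2 a ha)
      (hB2 _ (mem_image_of_mem _ hs)) ?_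
    rw [compl_compl]
    exact hnadj (mem_filter.mp ha).1 (mem_filter.mp hs).1
      (fun h => by have := hC4 s hs; rw [← h, hA2 a ha] at this; omega)
  have := card_add_card_le_of_pairwiseDisjoint_of_inter_nonempty hdA hdB hA2 hB2 hAB
  rw [hα] at this
  omega

end Matchings

namespace SimpleGraph

variable {V W : Type*} {G : SimpleGraph V}

theorem IsIndepSet.image {H : SimpleGraph W} (f : G ↪g H) {s : Set V} (hs : G.IsIndepSet s) :
    H.IsIndepSet (f '' s) := by
  rintro _ ⟨a, ha, rfl⟩ _ ⟨b, hb, rfl⟩ hne hadj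
  exact hs ha hb (fun h => hne (h ▸ rfl)) (f.map_adj_iff.mp hadj)

theorem Colorable.card_le_mul [Fintype V] {n k : ℕ} (hG : G.Colorable n)
    (hk : ∀ s : Finset V, G.IsIndepSet s → #s ≤ k) : Fintype.card V ≤ n * k := by
  classical
  obtain ⟨C⟩ := hG
  calc Fintype.card V = ∑ c : Fin n, #{v | C v = c} :=
        card_eq_sum_card_fiberwise fun v _ => mem_univ (C v)
    _ ≤ ∑ _c : Fin n, k := sum_le_sum fun c _ => hk _ fun v hv w hw _ hadj =>
        C.valid hadj ((mem_filter.mp hv).2.trans (mem_filter.mp hw).2.symm)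
    _ = n * k := by simp

end SimpleGraph

section CubeVertices

variable {n : ℕ}

def cubeVertex (c : ℝ) (s : Finset (Fin n)) : Fin n → ℝ := fun i => if i ∈ s then c else 0

theorem sum_sq_sub_cubeVertex (c : ℝ) (s t : Finset (Fin n)) :
    ∑ i, (cubeVertex c s i - cubeVertex c t i) ^ 2 = c ^ 2 * #(s ∆ t) := by
  have h (i) : (cubeVertex c s i - cubeVertex c t i) ^ 2 = if i ∈ s ∆ t then c ^ 2 else 0 := by
    by_cases hs : i ∈ s <;> by_cases ht : i ∈ t <;> simp [cubeVertex, mem_symmDiff, hs, ht]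
  simp only [h, sum_ite_mem, univ_inter, sum_const, nsmul_eq_mul]
  ring

theorem cubeVertex_injective {c : ℝ} (hc : c ≠ 0) :
    Function.Injective (cubeVertex (n := n) c) := by
  intro s t h
  have := sum_sq_sub_cubeVertex c s t
  simpa [h, hc, eq_comm (a := (0 : ℝ))] using this

noncomputable def symmDiffGraph.induceIsoDistSqGraph {c : ℝ} (hc : c ≠ 0)
    (S : Set (Finset (Fin n))) (k : ℕ) :
    (symmDiffGraph (Fin n) k).induce S ≃g distSqGraph (cubeVertex c '' S) (c ^ 2 * k) where
  toEquiv := Equiv.Set.image _ S (cubeVertex_injective hc)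
  map_rel_iff' {s t} := by
    change (_ ≠ _ ∧ _ = _) ↔ (_ ≠ _ ∧ _ = _)
    simp [sum_sq_sub_cubeVertex, hc, (cubeVertex_injective hc).eq_iff]

theorem twosAndZeros_eq_image (k : ℕ) : twosAndZeros k = cubeVertex 2 '' {s | #s = k} := by
  ext x
  simp [twosAndZeros, cubeVertex, funext_iff, eq_comm]

end CubeVertices

/-- The graph on `V₂ ∪ V₃` (vectors with exactly two, resp. four, coordinates
equal to `2` and the rest `0`), adjacency being squared distance `8`, has
chromatic number `8`. -/
theorem chromaticNumber_H_eq_eight :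
    (distSqGraph (twosAndZeros 2 ∪ twosAndZeros 4) 8).chromaticNumber = 8 := by
  set S : Set (Finset (Fin 6)) := {s | #s = 2 ∨ #s = 4}
  have hP : twosAndZeros 2 ∪ twosAndZeros 4 = cubeVertex 2 '' S := by
    rw [twosAndZeros_eq_image, twosAndZeros_eq_image, ← Set.image_union]
    rfl
  rw [hP, show (8 : ℝ) = 2 ^ 2 * (2 : ℕ) by norm_num,
    ← chromaticNumber_congr (symmDiffGraph.induceIsoDistSqGraph two_ne_zero S 2)]
  refine le_antisymm ?_ (le_chromaticNumber_iff_colorable.mpr fun m hm => ?_)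
  · exact ((symmDiffGraph_two_colorable (m := 3) (by simp)).of_hom
      (Embedding.induce S).toHom).chromaticNumber_le
  · have hcard : Fintype.card S = 30 := rfl
    have := hm.card_le_mul fun u hu => by
      rw [← card_map (Function.Embedding.subtype _)]
      refine card_le_four_of_isIndepSet_symmDiffGraph_two (by simp) (fun s hs => ?_) ?_
      · obtain ⟨s, -, rfl⟩ := mem_map.mp hs
        exact s.2
      · rw [coe_map]
        exact hu.image (Embedding.induce S)
    exact_mod_cast (show 8 ≤ m by omega)
end

section
/- Let V₂ be the set of vectors in ℝ^6 having exactly two coordinates equal to 2 and the remaining four coordinates equal to 0, and let V₃ be the set of vectors in ℝ^6 having exactly four coordinates equal to 2 and the remaining two coordinates equal to 0. Let H be the simple graph on V₂ ∪ V₃ in which two distinct points are adjacent if and only if their squared Euclidean distance equals 8. Then the independence number of H equals 4: there exists an independent set of H of size 4, and every independent set of H has size at most 4. -/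
open Finset
open scoped symmDiff

namespace Finset

variable {α : Type*} [DecidableEq α]

theorem card_symmDiff_add_two_mul_card_inter_s3 (s t : Finset α) :
    #(s ∆ t) + 2 * #(s ∩ t) = #s + #t := by
  have := card_union_add_card_inter s t
  have := card_le_card (inter_subset_union : s ∩ t ⊆ s ∪ t)
  rw [symmDiff_eq_sup_sdiff_inf, sup_eq_union, inf_eq_inter,
    card_sdiff_of_subset inter_subset_union]
  omega

theorem card_symmDiff_of_subset {s t : Finset α} (h : s ⊆ t) : #(s ∆ t) = #t - #s := by
  rw [symmDiff_of_le h, card_sdiff_of_subset h]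

theorem disjoint_of_card_symmDiff_ne_two_s3 {s t : Finset α} (hs : #s = 2) (ht : #t = 2)
    (hst : s ≠ t) (h : #(s ∆ t) ≠ 2) : Disjoint s t := by
  have := card_symmDiff_add_two_mul_card_inter_s3 s t
  have := card_le_card (inter_subset_left : s ∩ t ⊆ s)
  have hst' : #(s ∆ t) ≠ 0 := by simpa [symmDiff_eq_bot] using hst
  rw [disjoint_iff_inter_eq_empty, ← card_eq_zero]
  omega

theorem card_mul_le_card_of_pairwiseDisjoint {A : Finset (Finset α)} {u : Finset α} {k : ℕ}
    (hA : (A : Set (Finset α)).PairwiseDisjoint id) (hk : ∀ s ∈ A, k ≤ #(s ∩ u)) :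
    #A * k ≤ #u :=
  calc #A * k = ∑ _ ∈ A, k := by rw [sum_const, smul_eq_mul]
    _ ≤ ∑ s ∈ A, #(s ∩ u) := sum_le_sum hk
    _ = #(A.biUnion (· ∩ u)) := (card_biUnion (hA.mono_on fun _ _ => inter_subset_left)).symm
    _ ≤ #u := card_le_card (biUnion_subset.2 fun _ _ => inter_subset_right)

end Finset

theorem card_le_three_of_pairwiseDisjoint {A : Finset (Finset (Fin 6))}
    (hA₂ : ∀ a ∈ A, #a = 2) (hA : (A : Set (Finset (Fin 6))).PairwiseDisjoint id) :
    #A ≤ 3 := by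
  have := card_mul_le_card_of_pairwiseDisjoint (u := univ) (k := 2) hA
    fun a ha => by rw [inter_univ, hA₂ a ha]
  simp only [card_univ, Fintype.card_fin] at this
  omega

theorem card_add_card_le_four {A B : Finset (Finset (Fin 6))}
    (hA₂ : ∀ a ∈ A, #a = 2) (hB₂ : ∀ b ∈ B, #b = 2)
    (hA : (A : Set (Finset (Fin 6))).PairwiseDisjoint id)
    (hB : (B : Set (Finset (Fin 6))).PairwiseDisjoint id)
    (hAB : ∀ a ∈ A, ∀ b ∈ B, (a ∩ b).Nonempty) : #A + #B ≤ 4 := by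
  rcases A.eq_empty_or_nonempty with rfl | ⟨a, ha⟩
  · simpa using (card_le_three_of_pairwiseDisjoint hB₂ hB).trans (by norm_num : 3 ≤ 4)
  rcases B.eq_empty_or_nonempty with rfl | ⟨b, hb⟩
  · simpa using (card_le_three_of_pairwiseDisjoint hA₂ hA).trans (by norm_num : 3 ≤ 4)
  have hAb := card_mul_le_card_of_pairwiseDisjoint (u := b) (k := 1) hA
    fun a' ha' => card_pos.2 (hAB a' ha' b hb)
  have hBa := card_mul_le_card_of_pairwiseDisjoint (u := a) (k := 1) hB
    fun b' hb' => card_pos.2 (inter_comm a b' ▸ hAB a ha b' hb')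
  rw [hB₂ b hb] at hAb
  rw [hA₂ a ha] at hBa
  omega

theorem card_le_four_of_card_symmDiff_ne_two {N : Finset (Finset (Fin 6))}
    (hcard : ∀ s ∈ N, #s = 2 ∨ #s = 4)
    (hN : (N : Set (Finset (Fin 6))).Pairwise fun s t => #(s ∆ t) ≠ 2) : #N ≤ 4 := by
  set A := N.filter (#· = 2)
  set C := N.filter (¬#· = 2)
  have hA₂ : ∀ a ∈ A, #a = 2 := fun a ha => (mem_filter.1 ha).2
  have hC₄ : ∀ c ∈ C, #c = 4 := fun c hc => by
    obtain ⟨hcN, hc⟩ := mem_filter.1 hc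
    exact (hcard c hcN).resolve_left hc
  have hCc₂ : ∀ b ∈ C.image compl, #b = 2 := by
    simp only [mem_image]
    rintro _ ⟨c, hc, rfl⟩
    simp [card_compl, hC₄ c hc]
  have hA : (A : Set (Finset (Fin 6))).PairwiseDisjoint id := fun a ha a' ha' haa' =>
    disjoint_of_card_symmDiff_ne_two_s3 (hA₂ a ha) (hA₂ a' ha') haa'
      (hN (filter_subset _ _ ha) (filter_subset _ _ ha') haa')
  have hCc : (C.image compl : Set (Finset (Fin 6))).PairwiseDisjoint id := by
    rintro _ hb _ hb' hbb'
    obtain ⟨c, hc, rfl⟩ := mem_image.1 hb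
    obtain ⟨c', hc', rfl⟩ := mem_image.1 hb'
    refine disjoint_of_card_symmDiff_ne_two_s3 (hCc₂ _ hb) (hCc₂ _ hb') hbb' ?_
    rw [id, id, compl_symmDiff_compl]
    exact hN (filter_subset _ _ hc) (filter_subset _ _ hc') (ne_of_apply_ne _ hbb')
  have hACc : ∀ a ∈ A, ∀ b ∈ C.image compl, (a ∩ b).Nonempty := by
    rintro a ha _ hb
    obtain ⟨c, hc, rfl⟩ := mem_image.1 hb
    rw [← not_disjoint_iff_nonempty_inter, disjoint_compl_right_iff]
    intro hac
    refine hN (filter_subset _ _ ha) (filter_subset _ _ hc) ?_ ?_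
    · rintro rfl
      exact (mem_filter.1 hc).2 (hA₂ _ ha)
    · rw [card_symmDiff_of_subset hac, hA₂ a ha, hC₄ c hc]
  calc #N = #A + #C := (card_filter_add_card_filter_not _).symm
    _ = #A + #(C.image compl) := by rw [card_image_of_injective _ compl_injective]
    _ ≤ 4 := card_add_card_le_four hA₂ hCc₂ hA hCc hACc

section TwosAndZeros

variable {n : ℕ}

def ofFinset (s : Finset (Fin n)) : Fin n → ℝ := fun i => if i ∈ s then 2 else 0

noncomputable def supportFinset (x : Fin n → ℝ) : Finset (Fin n) := univ.filter (x · ≠ 0)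

theorem supportFinset_ofFinset (s : Finset (Fin n)) : supportFinset (ofFinset s) = s := by
  ext i
  simp [supportFinset, ofFinset]

theorem ofFinset_injective : Function.Injective (ofFinset (n := n)) :=
  Function.LeftInverse.injective supportFinset_ofFinset

theorem sum_sq_sub_ofFinset (s t : Finset (Fin n)) :
    ∑ i, (ofFinset s i - ofFinset t i) ^ 2 = 4 * #(s ∆ t) := by
  have hterm : ∀ i, (ofFinset s i - ofFinset t i) ^ 2 = if i ∈ s ∆ t then 4 else 0 := by
    intro i
    by_cases hs : i ∈ s <;> by_cases ht : i ∈ t <;> norm_num [ofFinset, mem_symmDiff, hs, ht]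
  simp [hterm, sum_ite_mem, mul_comm]

theorem distSqGraph_adj_iff {P : Set (Fin n → ℝ)} (hP : P ⊆ Set.range ofFinset) {u v : P} :
    (distSqGraph P 8).Adj u v ↔ #(supportFinset u.1 ∆ supportFinset v.1) = 2 := by
  obtain ⟨_, hu⟩ := u
  obtain ⟨_, hv⟩ := v
  obtain ⟨s, rfl⟩ := hP hu
  obtain ⟨t, rfl⟩ := hP hv
  simp only [distSqGraph, sum_sq_sub_ofFinset, supportFinset_ofFinset, ne_eq, Subtype.mk.injEq]
  constructor
  · rintro ⟨-, h⟩
    exact_mod_cast (by linarith : (#(s ∆ t) : ℝ) = 2)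
  · intro h
    refine ⟨fun hst => ?_, by rw [h]; norm_num⟩
    simp [ofFinset_injective hst] at h

theorem ofFinset_supportFinset {x : Fin n → ℝ} (hx : x ∈ Set.range ofFinset) :
    ofFinset (supportFinset x) = x := by
  obtain ⟨s, rfl⟩ := hx
  rw [supportFinset_ofFinset]

theorem injective_supportFinset_comp_val {P : Set (Fin n → ℝ)} (hP : P ⊆ Set.range ofFinset) :
    Function.Injective (supportFinset ∘ Subtype.val : P → Finset (Fin n)) := fun u v h =>
  Subtype.ext <| by
    rw [← ofFinset_supportFinset (hP u.2), ← ofFinset_supportFinset (hP v.2)]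
    exact congrArg ofFinset h

theorem distSqGraph_pairwise_not_adj_iff {P : Set (Fin n → ℝ)} (hP : P ⊆ Set.range ofFinset)
    (M : Set P) :
    M.Pairwise (fun u v => ¬(distSqGraph P 8).Adj u v) ↔
      ((supportFinset ∘ Subtype.val) '' M).Pairwise fun s t => #(s ∆ t) ≠ 2 := by
  rw [(injective_supportFinset_comp_val hP).injOn.pairwise_image]
  simp only [distSqGraph_adj_iff hP]
  rfl

end TwosAndZeros

theorem mem_twosAndZeros {k : ℕ} {x : Fin 6 → ℝ} :
    x ∈ twosAndZeros k ↔ ∃ s : Finset (Fin 6), #s = k ∧ ofFinset s = x := by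
  simp [twosAndZeros, ofFinset, funext_iff, eq_comm]

theorem twosAndZeros_subset_range (k : ℕ) : twosAndZeros k ⊆ Set.range ofFinset := fun _ hx =>
  let ⟨s, _, hs⟩ := mem_twosAndZeros.1 hx
  ⟨s, hs⟩

theorem range_supportFinset_comp_val (k l : ℕ) :
    Set.range (supportFinset ∘ Subtype.val :
        ↥(twosAndZeros k ∪ twosAndZeros l) → Finset (Fin 6)) = {s | #s = k ∨ #s = l} := by
  ext s
  simp [mem_twosAndZeros, or_and_right, exists_or, supportFinset_ofFinset]

/-- The independence number of the graph `H` on `V₂ ∪ V₃` (squared distance `8`)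
equals `4`: there is an independent set of size `4` and every independent set
has size at most `4`. -/
theorem indepNum_H_eq_four :
    (∃ M : Set ↥(twosAndZeros 2 ∪ twosAndZeros 4),
      M.Pairwise (fun a b => ¬ (distSqGraph (twosAndZeros 2 ∪ twosAndZeros 4) 8).Adj a b) ∧
      M.ncard = 4) ∧
    ∀ M : Set ↥(twosAndZeros 2 ∪ twosAndZeros 4),
      M.Pairwise (fun a b => ¬ (distSqGraph (twosAndZeros 2 ∪ twosAndZeros 4) 8).Adj a b) →
      M.ncard ≤ 4 := by
  have hP := Set.union_subset (twosAndZeros_subset_range 2) (twosAndZeros_subset_range 4)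
  set f : ↥(twosAndZeros 2 ∪ twosAndZeros 4) → Finset (Fin 6) := supportFinset ∘ Subtype.val
  have hf : f.Injective := injective_supportFinset_comp_val hP
  have hrange : Set.range f = {s | #s = 2 ∨ #s = 4} := range_supportFinset_comp_val 2 4
  constructor
  · let F : Finset (Finset (Fin 6)) := {{0, 1}, {2, 3}, {1, 3, 4, 5}, {0, 2, 4, 5}}
    have hF : (F : Set (Finset (Fin 6))) ⊆ Set.range f := by
      simp only [hrange, Set.subset_def, mem_coe]
      decide
    refine ⟨f ⁻¹' F, ?_, ?_⟩
    · rw [distSqGraph_pairwise_not_adj_iff hP, Set.image_preimage_eq_of_subset hF]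
      decide
    · rw [Set.ncard_preimage_of_injective_subset_range hf hF, Set.ncard_coe_finset]
      rfl
  · intro M hM
    obtain ⟨N, hN⟩ := (Set.toFinite (f '' M)).exists_finset_coe
    rw [← Set.ncard_image_of_injective M hf, ← hN, Set.ncard_coe_finset]
    refine card_le_four_of_card_symmDiff_ne_two (fun s hs => ?_) ?_
    · have : s ∈ Set.range f := Set.image_subset_range _ _ (hN ▸ mem_coe.2 hs)
      rwa [hrange] at this
    · rw [hN]
      exact (distSqGraph_pairwise_not_adj_iff hP M).1 hM
end
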